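/- arXiv:1708.00359 — 12 statements merged into one kernel-verified Lean document; each statement's English description precedes it below -/
import Mathlib

section
/- Let G be a group with exactly two elements (Nat.card G = 2), and let g be its non-identity element. Let ι be an index set with a distinguished element i, and let H = G ∗ FreeGroup ι (in Lean: Monoid.Coprod G (FreeGroup ι)) be the free product, regarded as a G-group via the canonical inclusion inl : G → H. Then the element inl(g) · inr(X_i) · inl(g) · inr(X_i)⁻¹ of H (where X_i = FreeGroup.of i and inr : FreeGroup ι → H is the canonical inclusion) is a T1-divisor of zero of (H, inl). -/
/-- The subgroup `G(x)` of `H` generated by the `G`-conjugates `f g * x * (f g)⁻¹` of `x`. -/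
def GConj {G H : Type*} [Group G] [Group H] (f : G →* H) (x : H) : Subgroup H :=
  Subgroup.closure {h : H | ∃ g : G, h = f g * x * (f g)⁻¹}

/-- `x` is a T1-divisor of zero of the `G`-group `(H, f)`. -/
def IsT1DivisorOfZero {G H : Type*} [Group G] [Group H] (f : G →* H) (x : H) : Prop :=
  x ≠ 1 ∧ ∃ y : H, y ≠ 1 ∧ ⁅GConj f x, GConj f y⁆ = ⊥

/-- `x` is a T2-divisor of zero of the `G`-group `(H, f)`. -/
def IsT2DivisorOfZero {G H : Type*} [Group G] [Group H] (f : G →* H) (x : H) : Prop :=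
  x ≠ 1 ∧ ∃ y : H, y ≠ 1 ∧ GConj f x ⊓ GConj f y = ⊥

/-- `I` is a T1-prime ideal of the `G`-group `(H, f)`: a normal subgroup, distinct from `H`,
such that `⁅G(x), G(y)⁆ ⊆ I` implies `x ∈ I` or `y ∈ I`. -/
def IsT1Prime {G H : Type*} [Group G] [Group H] (f : G →* H) (I : Subgroup H) : Prop :=
  I.Normal ∧ I ≠ ⊤ ∧ ∀ x y : H, ⁅GConj f x, GConj f y⁆ ≤ I → x ∈ I ∨ y ∈ I

/-- `I` is a T2-prime ideal of the `G`-group `(H, f)`: a normal subgroup, distinct from `H`,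
such that `G(x) ∩ G(y) ⊆ I` implies `x ∈ I` or `y ∈ I`. -/
def IsT2Prime {G H : Type*} [Group G] [Group H] (f : G →* H) (I : Subgroup H) : Prop :=
  I.Normal ∧ I ≠ ⊤ ∧ ∀ x y : H, GConj f x ⊓ GConj f y ≤ I → x ∈ I ∨ y ∈ I

/-- The T1-spectrum of the `G`-group `(H, f)`: the type of T1-prime ideals. -/
abbrev Spec1 {G H : Type*} [Group G] [Group H] (f : G →* H) : Type _ :=
  {P : Subgroup H // IsT1Prime f P}

/-- The T2-spectrum of the `G`-group `(H, f)`: the type of T2-prime ideals. -/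
abbrev Spec2 {G H : Type*} [Group G] [Group H] (f : G →* H) : Type _ :=
  {P : Subgroup H // IsT2Prime f P}

/-- `V¹_H(I)`: the set of T1-prime ideals containing `I`. -/
def V1 {G H : Type*} [Group G] [Group H] (f : G →* H) (I : Subgroup H) : Set (Spec1 f) :=
  {P | I ≤ P.val}

/-- `V²_H(I)`: the set of T2-prime ideals containing `I`. -/
def V2 {G H : Type*} [Group G] [Group H] (f : G →* H) (I : Subgroup H) : Set (Spec2 f) :=
  {P | I ≤ P.val}


open Classical in
/-- Hom from a group with at most two elements sending `g` to an involution `u`. -/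
noncomputable def homOfOrderTwo {G K : Type*} [Group G] [Group K] (g : G)
    (hcl : ∀ h : G, h = 1 ∨ h = g) (u : K) (hu : u * u = 1) : G →* K where
  toFun h := if h = 1 then 1 else u
  map_one' := by simp
  map_mul' a b := by
    have hgg : g * g = 1 := by
      rcases hcl (g * g) with h | h
      · exact h
      · have : g = 1 := by
          have : g * g = 1 * g := by simpa using h
          exact mul_right_cancel this
        simp [this]
    by_cases hg1 : g = 1
    · rcases hcl a with ha | ha <;> rcases hcl b with hb | hb <;> simp [ha, hb, hg1]
    · rcases hcl a with ha | ha <;> rcases hcl b with hb | hb <;>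
        simp [ha, hb, hgg, hu, hg1]

theorem homOfOrderTwo_apply {G K : Type*} [Group G] [Group K] (g : G) (hg : g ≠ 1)
    (hcl : ∀ h : G, h = 1 ∨ h = g) (u : K) (hu : u * u = 1) :
    homOfOrderTwo g hcl u hu g = u := by
  simp [homOfOrderTwo, hg]

theorem z2_divisor_of_zero {G : Type*} [Group G] (hG : Nat.card G = 2)
    (g : G) (hg : g ≠ 1) (ι : Type*) (i : ι) :
    IsT1DivisorOfZero (Monoid.Coprod.inl : G →* Monoid.Coprod G (FreeGroup ι))
      (Monoid.Coprod.inl g * Monoid.Coprod.inr (FreeGroup.of i) * Monoid.Coprod.inl g *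
        (Monoid.Coprod.inr (FreeGroup.of i) : Monoid.Coprod G (FreeGroup ι))⁻¹) := by
  classical
  set u : Monoid.Coprod G (FreeGroup ι) := Monoid.Coprod.inl g with hu_def
  set a : Monoid.Coprod G (FreeGroup ι) := Monoid.Coprod.inr (FreeGroup.of i) with ha_def
  -- basic facts about G
  have hgg : g * g = 1 := by
    have h1 : orderOf g ∣ 2 := hG ▸ orderOf_dvd_natCard g
    rcases (Nat.prime_two).eq_one_or_self_of_dvd _ h1 with h | h
    · exact absurd (orderOf_eq_one_iff.mp h) hg
    · have := pow_orderOf_eq_one g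
      rw [h, pow_two] at this
      exact this
  have hcl : ∀ h : G, h = 1 ∨ h = g := by
    intro h
    by_contra hc
    push_neg at hc
    haveI : Finite G := Nat.finite_of_card_ne_zero (by omega)
    haveI : Fintype G := Fintype.ofFinite G
    have h3 : ({1, g, h} : Finset G).card = 3 :=
      Finset.card_eq_three.mpr ⟨1, g, h, Ne.symm hg, Ne.symm hc.1, Ne.symm hc.2, rfl⟩
    have hle : ({1, g, h} : Finset G).card ≤ Fintype.card G := Finset.card_le_univ _
    rw [h3, ← Nat.card_eq_fintype_card, hG] at hle
    omega
  -- facts about u and a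
  have huu : u * u = 1 := by rw [hu_def, ← map_mul, hgg, map_one]
  have hu_inv : u⁻¹ = u := inv_eq_of_mul_eq_one_left huu
  set x : Monoid.Coprod G (FreeGroup ι) := u * a * u * a⁻¹ with hx_def
  -- conjugating x by u gives x⁻¹
  have key : u * x * u⁻¹ = x⁻¹ := by
    rw [hx_def, hu_inv]
    simp only [mul_inv_rev, inv_inv, hu_inv, ← mul_assoc]
    rw [huu, one_mul]
  -- GConj is contained in the cyclic subgroup generated by x
  have hsub : GConj (Monoid.Coprod.inl : G →* Monoid.Coprod G (FreeGroup ι)) x ≤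
      Subgroup.zpowers x := by
    rw [GConj, Subgroup.closure_le]
    rintro h ⟨g', rfl⟩
    rcases hcl g' with rfl | rfl
    · simp only [map_one, one_mul, inv_one, mul_one]
      exact Subgroup.mem_zpowers x
    · show u * x * u⁻¹ ∈ (Subgroup.zpowers x : Set _)
      rw [key]
      exact inv_mem (Subgroup.mem_zpowers x)
  -- x ≠ 1 via a homomorphism to Perm ℤ
  have hx_ne : x ≠ 1 := by
    set v : Equiv.Perm ℤ := Equiv.addRight (1 : ℤ) with hv_def
    set w : Equiv.Perm ℤ := Equiv.neg ℤ with hw_def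
    have hww : w * w = 1 := by
      ext n
      simp [hw_def, Equiv.Perm.mul_apply]
    set φ : Monoid.Coprod G (FreeGroup ι) →* Equiv.Perm ℤ :=
      Monoid.Coprod.lift (homOfOrderTwo g hcl w hww) (FreeGroup.lift fun _ => v) with hφ_def
    have hφu : φ u = w := by
      rw [hu_def, hφ_def, Monoid.Coprod.lift_apply_inl, homOfOrderTwo_apply g hg hcl w hww]
    have hφa : φ a = v := by
      rw [ha_def, hφ_def, Monoid.Coprod.lift_apply_inr, FreeGroup.lift_apply_of]
    intro hx1
    have : φ x = 1 := by rw [hx1, map_one]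
    rw [hx_def, map_mul, map_mul, map_mul, map_inv, hφu, hφa] at this
    have h0 : (w * v * w * v⁻¹) (0 : ℤ) = (1 : Equiv.Perm ℤ) (0 : ℤ) := by rw [this]
    simp [hw_def, hv_def, Equiv.Perm.mul_apply] at h0
  -- conclude
  refine ⟨hx_ne, x, hx_ne, ?_⟩
  rw [eq_bot_iff, Subgroup.commutator_le]
  intro g₁ hg₁ g₂ hg₂
  obtain ⟨m, rfl⟩ := Subgroup.mem_zpowers_iff.mp (hsub hg₁)
  obtain ⟨n, rfl⟩ := Subgroup.mem_zpowers_iff.mp (hsub hg₂)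
  rw [Subgroup.mem_bot, commutatorElement_eq_one_iff_commute]
  exact Commute.zpow_zpow_self x m n
end

section
/- Let G be a group, (H, f) a G-group, and x ∈ H with x ≠ 1 such that the subgroup G(x) of H is nilpotent (as a group). Then x is a T1-divisor of zero of (H, f). -/
/-!
`G(x)` is normalized by the image of `f`, hence so is its centralizer. A nontrivial nilpotent
group has nontrivial centre, so some `y ≠ 1` centralizes `G(x)`; all `G`-conjugates of `y` then
lie in the centralizer of `G(x)`, i.e. `⁅G(x), G(y)⁆ = ⊥`.
-/

namespace Subgroup

variable {H : Type*} [Group H]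

theorem normalizer_le_normalizer_centralizer (K : Subgroup H) :
    normalizer (K : Set H) ≤ normalizer (centralizer (K : Set H) : Set H) := by
  refine le_normalizer_iff.mpr fun h hh c hc k hk => ?_
  have hck : h⁻¹ * k * h * c = c * (h⁻¹ * k * h) := hc _ ((mem_normalizer_iff''.mp hh k).mp hk)
  calc k * (h * c * h⁻¹) = h * (h⁻¹ * k * h * c) * h⁻¹ := by group
    _ = h * (c * (h⁻¹ * k * h)) * h⁻¹ := by rw [hck]
    _ = h * c * h⁻¹ * k := by group

theorem nontrivial_centralizer_of_isNilpotent (K : Subgroup H) [Nontrivial K]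
    [Group.IsNilpotent K] : Nontrivial (centralizer (K : Set H)) := by
  obtain ⟨z, hz, hz1⟩ := (center K).bot_or_exists_ne_one.resolve_left
    (Group.IsNilpotent.center_ne_bot K)
  refine (nontrivial_iff_exists_ne_one _).mpr ⟨z, fun k hk => ?_, fun h => hz1 (Subtype.ext h)⟩
  exact congrArg Subtype.val (mem_center_iff.mp hz ⟨k, hk⟩)

end Subgroup

section GConj

open Subgroup

variable {G H : Type*} [Group G] [Group H] (f : G →* H)

theorem mem_GConj_self (x : H) : x ∈ GConj f x :=
  subset_closure ⟨1, by simp⟩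

theorem range_le_normalizer_GConj (x : H) : f.range ≤ normalizer (GConj f x : Set H) := by
  refine le_normalizer_closure_iff.mpr ?_
  rintro _ ⟨g, rfl⟩ _ ⟨g', rfl⟩
  exact subset_closure ⟨g * g', by simp [mul_assoc]⟩

theorem GConj_le_of_mem {S : Subgroup H} {y : H} (hy : y ∈ S)
    (hS : f.range ≤ normalizer (S : Set H)) : GConj f y ≤ S :=
  (closure_le _).mpr fun _ ⟨g, hg⟩ => hg ▸ le_normalizer_iff.mp hS _ ⟨g, rfl⟩ y hy

end GConj

theorem nilpotent_elem_is_t1_divisor {G H : Type*} [Group G] [Group H] (f : G →* H)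
    (x : H) (hx : x ≠ 1) (hnil : Group.IsNilpotent (GConj f x)) :
    IsT1DivisorOfZero f x := by
  have : Nontrivial (GConj f x) :=
    (Subgroup.nontrivial_iff_exists_ne_one _).mpr ⟨x, mem_GConj_self f x, hx⟩
  have := Subgroup.nontrivial_centralizer_of_isNilpotent (GConj f x)
  obtain ⟨y, hy, hy1⟩ := (Subgroup.centralizer (GConj f x : Set H)).exists_ne_one_of_nontrivial
  refine ⟨hx, y, hy1, ?_⟩
  rw [Subgroup.commutator_eq_bot_iff_le_centralizer, Subgroup.le_centralizer_iff]
  exact GConj_le_of_mem f hy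
    ((range_le_normalizer_GConj f x).trans (GConj f x).normalizer_le_normalizer_centralizer)
end

section
/- Let G be a group and (H, f) a G-group. (a) For all normal subgroups I, J of H: V¹_H(⁅I, J⁆) = V¹_H(I) ∪ V¹_H(J), where ⁅I, J⁆ denotes the commutator subgroup generated by commutators of elements of I and J. (b) For any family (I_a)_{a∈A} of normal subgroups of H, letting E((I_a)) = ⨆_{a∈A} I_a be the (normal) subgroup of H generated by all the I_a: V¹_H(E((I_a))) = ⋂_{a∈A} V¹_H(I_a). -/
lemma GConj_le_of_mem_s4 {G H : Type*} [Group G] [Group H] (f : G →* H) {I : Subgroup H}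
    (hI : I.Normal) {x : H} (hx : x ∈ I) : GConj f x ≤ I := by
  apply Subgroup.closure_le I |>.2
  rintro h ⟨g, rfl⟩
  exact hI.conj_mem x hx (f g)

theorem V1_commutator_and_sup {G H : Type*} [Group G] [Group H] (f : G →* H)
    (I J : Subgroup H) (hI : I.Normal) (hJ : J.Normal)
    {A : Type*} (Ia : A → Subgroup H) (hIa : ∀ a, (Ia a).Normal) :
    V1 f ⁅I, J⁆ = V1 f I ∪ V1 f J ∧ V1 f (⨆ a, Ia a) = ⋂ a, V1 f (Ia a) := by
  constructor
  · ext P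
    simp only [V1, Set.mem_setOf_eq, Set.mem_union]
    constructor
    · intro h
      by_contra hc
      push_neg at hc
      obtain ⟨hcI, hcJ⟩ := hc
      obtain ⟨x, hxI, hxP⟩ := SetLike.not_le_iff_exists.1 hcI
      obtain ⟨y, hyI, hyP⟩ := SetLike.not_le_iff_exists.1 hcJ
      have : ⁅GConj f x, GConj f y⁆ ≤ P.val :=
        le_trans (Subgroup.commutator_mono (GConj_le_of_mem_s4 f hI hxI)
          (GConj_le_of_mem_s4 f hJ hyI)) h
      rcases P.prop.2.2 x y this with h' | h'
      · exact hxP h'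
      · exact hyP h'
    · rintro (h | h)
      · exact le_trans (Subgroup.commutator_le_left I J) h
      · exact le_trans (Subgroup.commutator_le_right I J) h
  · ext P
    simp only [V1, Set.mem_setOf_eq, Set.mem_iInter, iSup_le_iff]
end

section
/- Let G be a group and (H, f) a G-group. (a) For all normal subgroups I, J of H: V²_H(I ∩ J) = V²_H(I) ∪ V²_H(J). (b) For any family (I_a)_{a∈A} of normal subgroups of H, letting E((I_a)) = ⨆_{a∈A} I_a be the (normal) subgroup of H generated by all the I_a: V²_H(E((I_a))) = ⋂_{a∈A} V²_H(I_a). -/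
lemma GConj_le {G H : Type*} [Group G] [Group H] (f : G →* H) {N : Subgroup H}
    (hN : N.Normal) {x : H} (hx : x ∈ N) : GConj f x ≤ N := by
  apply Subgroup.closure_le N |>.mpr
  rintro h ⟨g, rfl⟩
  exact hN.conj_mem x hx (f g)

theorem V2_inf_and_sup {G H : Type*} [Group G] [Group H] (f : G →* H)
    (I J : Subgroup H) (hI : I.Normal) (hJ : J.Normal)
    {A : Type*} (Ia : A → Subgroup H) (hIa : ∀ a, (Ia a).Normal) :
    V2 f (I ⊓ J) = V2 f I ∪ V2 f J ∧ V2 f (⨆ a, Ia a) = ⋂ a, V2 f (Ia a) := by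
  constructor
  · ext P
    simp only [V2, Set.mem_setOf_eq, Set.mem_union]
    constructor
    · intro h
      by_contra hc
      push_neg at hc
      obtain ⟨hInP, hJnP⟩ := hc
      rw [SetLike.not_le_iff_exists] at hInP hJnP
      obtain ⟨x, hxI, hxP⟩ := hInP
      obtain ⟨y, hyJ, hyP⟩ := hJnP
      have hle : GConj f x ⊓ GConj f y ≤ P.val := by
        refine le_trans (inf_le_inf (GConj_le f hI hxI) (GConj_le f hJ hyJ)) h
      rcases P.prop.2.2 x y hle with h' | h'
      · exact hxP h'
      · exact hyP h'
    · rintro (h | h) <;> exact le_trans (by simp) h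
  · ext P
    simp only [V2, Set.mem_setOf_eq, Set.mem_iInter, iSup_le_iff]
end

section
/- Let G be a group and (H, f) a G-group. For all normal subgroups I, J of H: V¹_H(I ∩ J) = V¹_H(⁅I, J⁆), where ⁅I, J⁆ denotes the commutator subgroup generated by commutators of elements of I and J. -/
theorem V1_inf_eq_V1_commutator {G H : Type*} [Group G] [Group H] (f : G →* H)
    (I J : Subgroup H) (hI : I.Normal) (hJ : J.Normal) :
    V1 f (I ⊓ J) = V1 f ⁅I, J⁆ := by
  have hGC : ∀ (K : Subgroup H), K.Normal → ∀ x ∈ K, GConj f x ≤ K := by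
    intro K hK x hx
    apply Subgroup.closure_le K |>.2
    rintro h ⟨g, rfl⟩
    exact hK.conj_mem x hx (f g)
  have hsub : ⁅I, J⁆ ≤ I ⊓ J := by
    exact le_inf (Subgroup.commutator_le_left I J) (Subgroup.commutator_le_right I J)
  ext P
  simp only [V1, Set.mem_setOf_eq]
  constructor
  · intro h
    exact hsub.trans h
  · intro h x hx
    obtain ⟨hN, hT, hP⟩ := P.2
    have hcomm : ⁅GConj f x, GConj f x⁆ ≤ P.val := by
      refine le_trans ?_ h
      exact Subgroup.commutator_mono (hGC I hI x hx.1) (hGC J hJ x hx.2)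
    rcases hP x x hcomm with h' | h' <;> exact h'
end

section
/- Let G be a group, (H, f) a G-group, and I_1, …, I_n normal subgroups of H such that I_1 ∩ I_2 ∩ … ∩ I_n = {1} and such that for all j ≠ k the subgroup generated by I_j and I_k is all of H (I_j ⊔ I_k = ⊤, equivalently I_j·I_k = H). Then Spec¹_G(H) is the disjoint union of the sets V¹_H(I_1), …, V¹_H(I_n); that is, Spec¹_G(H) = ⋃_{j=1}^{n} V¹_H(I_j), and V¹_H(I_j) ∩ V¹_H(I_k) = ∅ whenever j ≠ k. -/
lemma gconj_le {G H : Type*} [Group G] [Group H] (f : G →* H) {x : H} {N : Subgroup H}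
    (hN : N.Normal) (hx : x ∈ N) : GConj f x ≤ N := by
  apply Subgroup.closure_le N |>.2
  rintro h ⟨g, rfl⟩
  exact hN.conj_mem x hx (f g)

theorem spec1_disjoint_union {G H : Type*} [Group G] [Group H] (f : G →* H) (n : ℕ)
    (I : Fin n → Subgroup H) (hnorm : ∀ j, (I j).Normal)
    (hinf : (⨅ j, I j) = ⊥) (hsup : ∀ j k, j ≠ k → I j ⊔ I k = ⊤) :
    (⋃ j, V1 f (I j)) = Set.univ ∧ ∀ j k, j ≠ k → V1 f (I j) ∩ V1 f (I k) = ∅ := by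
  constructor
  · ext P
    simp only [Set.mem_iUnion, Set.mem_univ, iff_true]
    obtain ⟨P, hPn, hPt, hPp⟩ := P
    -- key claim by induction on finsets
    have key : ∀ s : Finset (Fin n), (⨅ j ∈ s, I j) ≤ P → ∃ j ∈ s, I j ≤ P := by
      intro s
      induction s using Finset.induction with
      | empty =>
        intro h
        simp only [Finset.notMem_empty, iInf_false, iInf_top, top_le_iff] at h
        exact absurd h hPt
      | @insert a t ha ih =>
        intro h
        rw [Finset.iInf_insert] at h
        by_cases ht : (⨅ j ∈ t, I j) ≤ P
        · obtain ⟨j, hj, hjP⟩ := ih ht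
          exact ⟨j, Finset.mem_insert_of_mem hj, hjP⟩
        · have hKnorm : (⨅ j ∈ t, I j).Normal := by
            constructor
            intro x hx g
            simp only [Subgroup.mem_iInf] at hx ⊢
            intro j hj
            exact (hnorm j).conj_mem x (hx j hj) g
          obtain ⟨y, hy, hyP⟩ := SetLike.not_le_iff_exists.1 ht
          refine ⟨a, Finset.mem_insert_self a t, fun x hx => ?_⟩
          have hcomm : ⁅GConj f x, GConj f y⁆ ≤ P := by
            calc ⁅GConj f x, GConj f y⁆ ≤ ⁅I a, ⨅ j ∈ t, I j⁆ :=
                  Subgroup.commutator_mono (gconj_le f (hnorm a) hx) (gconj_le f hKnorm hy)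
              _ ≤ I a ⊓ (⨅ j ∈ t, I j) :=
                  @Subgroup.commutator_le_inf _ _ _ _ (hnorm a) hKnorm
              _ ≤ P := h
          exact (hPp x y hcomm).resolve_right (fun hxP => hyP hxP)
    have : (⨅ j ∈ Finset.univ, I j) ≤ P := by
      simp only [Finset.mem_univ, iInf_true]
      rw [hinf]; exact bot_le
    obtain ⟨j, _, hj⟩ := key Finset.univ this
    exact ⟨j, hj⟩
  · intro j k hjk
    ext P
    simp only [Set.mem_inter_iff, Set.mem_empty_iff_false, iff_false, not_and]
    intro hj hk
    have : (⊤ : Subgroup H) ≤ P.val := (hsup j k hjk) ▸ sup_le hj hk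
    exact P.2.2.1 (top_le_iff.1 this)
end

section
/- Let G be a group, (H, f) a G-group, and I a normal subgroup of H such that ⋂_{P ∈ V²_H(I)} P = I (the intersection being taken as ⊤ if V²_H(I) is empty). Say that V²_H(I) is irreducible if it is nonempty and for all normal subgroups J, K of H, V²_H(I) ⊆ V²_H(J) ∪ V²_H(K) implies V²_H(I) ⊆ V²_H(J) or V²_H(I) ⊆ V²_H(K). Then V²_H(I) is irreducible if and only if I is a T2-prime ideal of (H, f). -/
/-- `V²_H(I)` as a set of subgroups of `H`. -/
def V2set {G H : Type*} [Group G] [Group H] (f : G →* H) (I : Subgroup H) :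
    Set (Subgroup H) :=
  {P | IsT2Prime f P ∧ I ≤ P}

theorem V2_irreducible_iff_t2_prime {G H : Type*} [Group G] [Group H] (f : G →* H)
    (I : Subgroup H) (hI : I.Normal) (hrad : sInf (V2set f I) = I) :
    ((V2set f I).Nonempty ∧ ∀ J K : Subgroup H, J.Normal → K.Normal →
        V2set f I ⊆ V2set f J ∪ V2set f K →
        V2set f I ⊆ V2set f J ∨ V2set f I ⊆ V2set f K) ↔
      IsT2Prime f I := by
  constructor
  · rintro ⟨⟨P0, hP0⟩, hirr⟩
    refine ⟨hI, ?_, ?_⟩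
    · rintro rfl
      exact hP0.1.2.1 (top_le_iff.mp hP0.2)
    · intro x y hxy
      by_contra hcon
      push_neg at hcon
      obtain ⟨hx, hy⟩ := hcon
      have hsub : V2set f I ⊆ V2set f (Subgroup.normalClosure {x}) ∪
          V2set f (Subgroup.normalClosure {y}) := by
        rintro P ⟨hP, hIP⟩
        rcases hP.2.2 x y (le_trans hxy hIP) with h | h
        · left
          haveI := hP.1
          exact ⟨hP, Subgroup.normalClosure_le_normal (Set.singleton_subset_iff.mpr h)⟩
        · right
          haveI := hP.1
          exact ⟨hP, Subgroup.normalClosure_le_normal (Set.singleton_subset_iff.mpr h)⟩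
      rcases hirr _ _ (Subgroup.normalClosure_normal) (Subgroup.normalClosure_normal) hsub
        with h | h
      · apply hx
        rw [← hrad]
        refine Subgroup.mem_sInf.mpr fun P hP => (h hP).2 ?_
        exact Subgroup.subset_normalClosure rfl
      · apply hy
        rw [← hrad]
        refine Subgroup.mem_sInf.mpr fun P hP => (h hP).2 ?_
        exact Subgroup.subset_normalClosure rfl
  · intro hprime
    have hmem : I ∈ V2set f I := ⟨hprime, le_refl I⟩
    refine ⟨⟨I, hmem⟩, fun J K _ _ hsub => ?_⟩
    rcases hsub hmem with ⟨_, hJ⟩ | ⟨_, hK⟩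
    · exact Or.inl fun P hP => ⟨hP.1, le_trans hJ hP.2⟩
    · exact Or.inr fun P hP => ⟨hP.1, le_trans hK hP.2⟩
end

section
/- Let G be a nontrivial group such that the G-group (G, id) has no T1-divisors of zero (i.e., (G, id) is T1-integral). Then for every n and every x ∈ Gⁿ, the ideal I_x = ker(e_x) is a T1-prime ideal of the G-group (G[X_1,…,X_n], inl). -/
/-- The evaluation homomorphism `e_x : G[X_1,…,X_n] → G` : identity on `G`, sends `X_i` to `x i`. -/
def evalHom {G : Type*} [Group G] {n : ℕ} (x : Fin n → G) :
    Monoid.Coprod G (FreeGroup (Fin n)) →* G :=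
  Monoid.Coprod.lift (MonoidHom.id G) (FreeGroup.lift x)

/-- The affine `G`-variety associated to a normal subgroup `I` of `G[X_1,…,X_n]`. -/
def VarG {G : Type*} [Group G] {n : ℕ} (I : Subgroup (Monoid.Coprod G (FreeGroup (Fin n)))) :
    Set (Fin n → G) :=
  {x | ∀ P ∈ I, evalHom x P = 1}
lemma map_GConj {G : Type*} [Group G] {n : ℕ} (x : Fin n → G)
    (u : Monoid.Coprod G (FreeGroup (Fin n))) :
    (GConj (Monoid.Coprod.inl : G →* _) u).map (evalHom x)
      = GConj (MonoidHom.id G) (evalHom x u) := by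
  rw [GConj, GConj, MonoidHom.map_closure]
  congr 1
  ext h
  constructor
  · rintro ⟨_, ⟨g, rfl⟩, rfl⟩
    exact ⟨g, by simp [evalHom]⟩
  · rintro ⟨g, rfl⟩
    exact ⟨_, ⟨g, rfl⟩, by simp [evalHom]⟩

theorem Ix_t1_prime {G : Type*} [Group G] [Nontrivial G]
    (hG : ∀ x : G, ¬ IsT1DivisorOfZero (MonoidHom.id G) x) (n : ℕ) (x : Fin n → G) :
    IsT1Prime (Monoid.Coprod.inl : G →* Monoid.Coprod G (FreeGroup (Fin n)))
      (MonoidHom.ker (evalHom x)) := by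
  refine ⟨MonoidHom.normal_ker _, ?_, ?_⟩
  · intro h
    obtain ⟨g, hg⟩ := exists_ne (1 : G)
    have : Monoid.Coprod.inl g ∈ (evalHom x).ker := h ▸ Subgroup.mem_top _
    rw [MonoidHom.mem_ker] at this
    simp [evalHom] at this
    exact hg this
  · intro u v huv
    by_contra hc
    push_neg at hc
    obtain ⟨hu, hv⟩ := hc
    have hmap : ⁅GConj (MonoidHom.id G) (evalHom x u),
        GConj (MonoidHom.id G) (evalHom x v)⁆ = ⊥ := by
      rw [← map_GConj, ← map_GConj, ← Subgroup.map_commutator,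
        Subgroup.map_eq_bot_iff]
      exact huv
    exact hG (evalHom x u) ⟨fun h => hu (MonoidHom.mem_ker.mpr h), evalHom x v,
      fun h => hv (MonoidHom.mem_ker.mpr h), hmap⟩
end

section
/- Let G be a group such that the G-group (G, id) has no T1-divisors of zero (i.e., (G, id) is T1-integral). Then (a) for all normal subgroups I, J of G[X_1,…,X_n]: Var_G(I) ∪ Var_G(J) = Var_G(⁅I, J⁆), where ⁅I, J⁆ is the commutator subgroup generated by commutators of elements of I and J; and (b) for any family (I_a)_{a∈A} of normal subgroups of G[X_1,…,X_n]: ⋂_{a∈A} Var_G(I_a) = Var_G(⨆_{a∈A} I_a), where ⨆_{a∈A} I_a is the subgroup generated by all the I_a. -/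
lemma gconj_le_map {G : Type*} [Group G] {n : ℕ} (x : Fin n → G)
    {I : Subgroup (Monoid.Coprod G (FreeGroup (Fin n)))} (hI : I.Normal)
    {P : Monoid.Coprod G (FreeGroup (Fin n))} (hP : P ∈ I) :
    GConj (MonoidHom.id G) (evalHom x P) ≤ I.map (evalHom x) := by
  apply Subgroup.closure_le _ |>.2
  rintro h ⟨g, rfl⟩
  refine ⟨Monoid.Coprod.inl g * P * (Monoid.Coprod.inl g)⁻¹, hI.conj_mem P hP _, ?_⟩
  simp [evalHom]

theorem var_union_and_inter_t1 {G : Type*} [Group G]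
    (hG : ∀ x : G, ¬ IsT1DivisorOfZero (MonoidHom.id G) x) (n : ℕ)
    (I J : Subgroup (Monoid.Coprod G (FreeGroup (Fin n)))) (hI : I.Normal) (hJ : J.Normal)
    {A : Type*} (Ia : A → Subgroup (Monoid.Coprod G (FreeGroup (Fin n))))
    (hIa : ∀ a, (Ia a).Normal) :
    VarG I ∪ VarG J = VarG ⁅I, J⁆ ∧ (⋂ a, VarG (Ia a)) = VarG (⨆ a, Ia a) := by
  constructor
  · apply subset_antisymm
    · rintro x (hx | hx) Q hQ
      · exact hx Q (Subgroup.commutator_le_left I J hQ)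
      · exact hx Q (Subgroup.commutator_le_right I J hQ)
    · intro x hx
      by_contra hmem
      have hxI : x ∉ VarG I := fun h => hmem (Or.inl h)
      have hxJ : x ∉ VarG J := fun h => hmem (Or.inr h)
      simp only [VarG, Set.mem_setOf_eq, not_forall] at hxI hxJ
      obtain ⟨P, hP, hP1⟩ := hxI
      obtain ⟨Q, hQ, hQ1⟩ := hxJ
      refine hG (evalHom x P) ⟨hP1, evalHom x Q, hQ1, ?_⟩
      have hmap : (⁅I, J⁆ : Subgroup _).map (evalHom x) = ⊥ := by
        rw [eq_bot_iff]
        rintro g ⟨R, hR, rfl⟩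
        exact hx R hR
      rw [eq_bot_iff, ← hmap, Subgroup.map_commutator]
      exact Subgroup.commutator_mono (gconj_le_map x hI hP) (gconj_le_map x hJ hQ)
  · ext x
    simp only [Set.mem_iInter, VarG, Set.mem_setOf_eq]
    constructor
    · intro h P hP
      have : (⨆ a, Ia a) ≤ (evalHom x).ker := iSup_le fun a P hP => h a P hP
      exact this hP
    · intro h a P hP
      exact h P (Subgroup.mem_iSup_of_mem a hP)
end

section
/- Let G be a group, (H, f_H) and (H', f_{H'}) G-groups, and m : H → H' a group homomorphism with m ∘ f_H = f_{H'} (a morphism in the comma category C(G)). Then for every T1-prime ideal P of (H', f_{H'}), the preimage m⁻¹(P) (in Lean: Subgroup.comap m P) is a T1-prime ideal of (H, f_H); in particular m⁻¹(P) ≠ H. -/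
/-! The image of `G(x)` under `m` is `G(m x)` for the composed structure map, which carries the
prime condition back along `m`. Properness of `m⁻¹(P)` is the real point: otherwise `P` contains
the image of `G`, so `G(x)` is cyclic modulo `P` for every `x`; then `⁅G(x), G(x)⁆ ⊆ P` and
primality forces `x ∈ P`, i.e. `P = H'`. -/

section GGroup

variable {G H H' : Type*} [Group G] [Group H] [Group H']

theorem gConj_one (x : H) : GConj (1 : G →* H) x = Subgroup.zpowers x := by
  rw [GConj, Subgroup.zpowers_eq_closure]
  congr 1
  ext h
  simp

theorem map_gConj (m : H →* H') (f : G →* H) (x : H) :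
    (GConj f x).map m = GConj (m.comp f) (m x) := by
  rw [GConj, GConj, MonoidHom.map_closure]
  congr 1
  ext h'
  constructor
  · rintro ⟨h, ⟨g, rfl⟩, rfl⟩
    exact ⟨g, by simp⟩
  · rintro ⟨g, rfl⟩
    exact ⟨_, ⟨g, rfl⟩, by simp⟩

/-- Modulo `N` the structure map is trivial, so `G(x)` becomes the cyclic group generated by
the image of `x`. -/
theorem commutator_gConj_self_le {f : G →* H} {N : Subgroup H} [N.Normal] (hN : f.range ≤ N)
    (x : H) : ⁅GConj f x, GConj f x⁆ ≤ N := by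
  set π := QuotientGroup.mk' N
  have hπf : π.comp f = 1 := by
    ext g
    exact (QuotientGroup.eq_one_iff _).mpr (hN ⟨g, rfl⟩)
  rw [← QuotientGroup.ker_mk' N, ← MonoidHom.comap_bot, ← Subgroup.map_le_iff_le_comap,
    Subgroup.map_commutator, map_gConj, hπf, gConj_one,
    Subgroup.commutator_eq_bot_iff_le_centralizer.mpr (Subgroup.le_centralizer _)]

theorem IsT1Prime.not_range_le {f : G →* H} {P : Subgroup H} (hP : IsT1Prime f P) :
    ¬ f.range ≤ P := by
  intro hrange
  obtain ⟨hN, hne, hprime⟩ := hP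
  refine hne ((Subgroup.eq_top_iff' P).mpr fun x ↦ ?_)
  exact or_self_iff.mp (hprime x x (commutator_gConj_self_le hrange x))

theorem IsT1Prime.comap {f : G →* H} {m : H →* H'} {P : Subgroup H'}
    (hP : IsT1Prime (m.comp f) P) : IsT1Prime f (P.comap m) := by
  refine ⟨hP.1.comap m, fun htop ↦ hP.not_range_le ?_, fun x y hxy ↦ hP.2.2 _ _ ?_⟩
  · rintro _ ⟨g, rfl⟩
    exact (htop ▸ Subgroup.mem_top (f g) : f g ∈ P.comap m)
  · rw [← map_gConj, ← map_gConj, ← Subgroup.map_commutator]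
    exact Subgroup.map_le_iff_le_comap.mpr hxy

end GGroup

theorem comap_t1_prime {G H H' : Type*} [Group G] [Group H] [Group H']
    (fH : G →* H) (fH' : G →* H') (m : H →* H') (hm : m.comp fH = fH')
    (P : Subgroup H') (hP : IsT1Prime fH' P) :
    IsT1Prime fH (Subgroup.comap m P) ∧ Subgroup.comap m P ≠ ⊤ := by
  subst hm
  exact ⟨hP.comap, hP.comap.2.1⟩
end

section
/- Let G be a group, (H, f_H) and (H', f_{H'}) G-groups, and m : H → H' a surjective group homomorphism with m ∘ f_H = f_{H'}. If Q is a T1-prime ideal of (H, f_H) with ker m ⊆ Q, then the image m(Q) (in Lean: Subgroup.map m Q) is a T1-prime ideal of (H', f_{H'}). -/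
lemma map_GConj_s18 {G H H' : Type*} [Group G] [Group H] [Group H']
    (fH : G →* H) (fH' : G →* H') (m : H →* H') (hm : m.comp fH = fH') (x : H) :
    Subgroup.map m (GConj fH x) = GConj fH' (m x) := by
  rw [GConj, GConj, MonoidHom.map_closure]
  congr 1
  ext h'
  constructor
  · rintro ⟨h, ⟨g, rfl⟩, rfl⟩
    exact ⟨g, by simp [← hm]⟩
  · rintro ⟨g, rfl⟩
    exact ⟨fH g * x * (fH g)⁻¹, ⟨g, rfl⟩, by simp [← hm]⟩

theorem map_t1_prime {G H H' : Type*} [Group G] [Group H] [Group H']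
    (fH : G →* H) (fH' : G →* H') (m : H →* H') (hm : m.comp fH = fH')
    (hsurj : Function.Surjective m) (Q : Subgroup H) (hQ : IsT1Prime fH Q)
    (hker : MonoidHom.ker m ≤ Q) :
    IsT1Prime fH' (Subgroup.map m Q) := by
  obtain ⟨hnorm, hne, hprime⟩ := hQ
  have hcomap : Subgroup.comap m (Subgroup.map m Q) = Q := by
    rw [Subgroup.comap_map_eq, sup_eq_left.mpr hker]
  refine ⟨Subgroup.Normal.map hnorm m hsurj, ?_, ?_⟩
  · intro h
    apply hne
    rw [← hcomap, h, Subgroup.comap_top]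
  · intro x' y' hcomm
    obtain ⟨x, rfl⟩ := hsurj x'
    obtain ⟨y, rfl⟩ := hsurj y'
    have : ⁅GConj fH x, GConj fH y⁆ ≤ Q := by
      rw [← hcomap]
      intro z hz
      have : m z ∈ ⁅GConj fH' (m x), GConj fH' (m y)⁆ := by
        rw [← map_GConj_s18 fH fH' m hm x, ← map_GConj_s18 fH fH' m hm y,
          ← Subgroup.map_commutator]
        exact ⟨z, hz, rfl⟩
      exact hcomm this
    rcases hprime x y this with h | h
    · exact Or.inl ⟨x, h, rfl⟩
    · exact Or.inr ⟨y, h, rfl⟩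
end

section
/- Let G be a group and (H, f_H) a G-group. Let rad¹_G(H) = ⋂_{P ∈ Spec¹_G(H)} P (taken to be all of H if Spec¹_G(H) is empty); it is a normal subgroup of H. Let p : H → H/rad¹_G(H) be the quotient homomorphism, and regard H/rad¹_G(H) as a G-group via p ∘ f_H. Then the map P ↦ p⁻¹(P) (in Lean: Subgroup.comap p P) is a bijection from Spec¹_G(H/rad¹_G(H)) onto Spec¹_G(H), with inverse Q ↦ p(Q). -/
/-- The T1-radical of the `G`-group `(H, f)`: the intersection of all T1-prime ideals
(all of `H` if there are none). -/
def rad1 {G H : Type*} [Group G] [Group H] (f : G →* H) : Subgroup H :=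
  sInf {P : Subgroup H | IsT1Prime f P}

instance rad1_normal {G H : Type*} [Group G] [Group H] (f : G →* H) : (rad1 f).Normal := by
  constructor
  intro x hx g
  simp only [rad1, Subgroup.mem_sInf] at hx ⊢
  intro P hP
  exact hP.1.conj_mem x (hx P hP) g


lemma GConj_map {G H : Type*} [Group G] [Group H] (f : G →* H) (N : Subgroup H) [N.Normal]
    (x : H) :
    GConj ((QuotientGroup.mk' N).comp f) ((QuotientGroup.mk' N) x)
      = Subgroup.map (QuotientGroup.mk' N) (GConj f x) := by
  unfold GConj
  rw [MonoidHom.map_closure]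
  congr 1
  ext h
  constructor
  · rintro ⟨g, rfl⟩
    exact ⟨f g * x * (f g)⁻¹, ⟨g, rfl⟩, by simp⟩
  · rintro ⟨h', ⟨g, rfl⟩, rfl⟩
    exact ⟨g, by simp⟩

lemma rad1_le_prime {G H : Type*} [Group G] [Group H] (f : G →* H) {P : Subgroup H}
    (hP : IsT1Prime f P) : rad1 f ≤ P :=
  sInf_le hP

theorem spec1_quotient_radical_bijection {G H : Type*} [Group G] [Group H] (f : G →* H) :
    Set.BijOn
        (fun P : Subgroup (H ⧸ rad1 f) => Subgroup.comap (QuotientGroup.mk' (rad1 f)) P)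
        {P : Subgroup (H ⧸ rad1 f) |
          IsT1Prime ((QuotientGroup.mk' (rad1 f)).comp f) P}
        {P : Subgroup H | IsT1Prime f P} ∧
      Set.InvOn
        (fun Q : Subgroup H => Subgroup.map (QuotientGroup.mk' (rad1 f)) Q)
        (fun P : Subgroup (H ⧸ rad1 f) => Subgroup.comap (QuotientGroup.mk' (rad1 f)) P)
        {P : Subgroup (H ⧸ rad1 f) |
          IsT1Prime ((QuotientGroup.mk' (rad1 f)).comp f) P}
        {P : Subgroup H | IsT1Prime f P} := by
  set π := QuotientGroup.mk' (rad1 f)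
  have hπs : Function.Surjective π := QuotientGroup.mk'_surjective _
  have hker : π.ker = rad1 f := QuotientGroup.ker_mk' _
  -- comap preserves primeness
  have hcomap : ∀ P : Subgroup (H ⧸ rad1 f), IsT1Prime (π.comp f) P →
      IsT1Prime f (Subgroup.comap π P) := by
    rintro P ⟨hN, hne, hp⟩
    refine ⟨hN.comap π, ?_, ?_⟩
    · intro h
      apply hne
      rw [← Subgroup.map_comap_eq_self_of_surjective hπs P, h,
        Subgroup.map_top_of_surjective _ hπs]
    · intro x y hxy
      have : ⁅GConj (π.comp f) (π x), GConj (π.comp f) (π y)⁆ ≤ P := by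
        rw [GConj_map, GConj_map, ← Subgroup.map_commutator]
        exact (Subgroup.map_le_iff_le_comap).2 hxy
      exact hp (π x) (π y) this
  -- map preserves primeness for primes of H (they contain rad1 = ker π)
  have hmap : ∀ Q : Subgroup H, IsT1Prime f Q → IsT1Prime (π.comp f) (Subgroup.map π Q) := by
    rintro Q hQ
    obtain ⟨hN, hne, hp⟩ := hQ
    have hkQ : π.ker ≤ Q := hker.le.trans (rad1_le_prime f ⟨hN, hne, hp⟩)
    refine ⟨Subgroup.Normal.map hN π hπs, ?_, ?_⟩
    · intro h
      apply hne
      have := congrArg (Subgroup.comap π) h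
      rwa [Subgroup.comap_map_eq_self hkQ, Subgroup.comap_top] at this
    · intro a b hab
      obtain ⟨x, rfl⟩ := hπs a
      obtain ⟨y, rfl⟩ := hπs b
      rw [GConj_map, GConj_map, ← Subgroup.map_commutator] at hab
      have : ⁅GConj f x, GConj f y⁆ ≤ Q := by
        have := Subgroup.map_le_iff_le_comap.1 hab
        rwa [Subgroup.comap_map_eq_self hkQ] at this
      rcases hp x y this with h | h
      · exact Or.inl ⟨x, h, rfl⟩
      · exact Or.inr ⟨y, h, rfl⟩
  have hmc : ∀ P : Subgroup (H ⧸ rad1 f),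
      Subgroup.map π (Subgroup.comap π P) = P := fun P =>
    Subgroup.map_comap_eq_self_of_surjective hπs P
  have hcm : ∀ Q : Subgroup H, IsT1Prime f Q →
      Subgroup.comap π (Subgroup.map π Q) = Q := fun Q hQ =>
    Subgroup.comap_map_eq_self (hker.le.trans (rad1_le_prime f hQ))
  refine ⟨⟨fun P hP => hcomap P hP, ?_, ?_⟩, ?_, ?_⟩
  · intro P hP P' hP' h
    have := congrArg (Subgroup.map π) h
    rwa [hmc, hmc] at this
  · intro Q hQ
    exact ⟨Subgroup.map π Q, hmap Q hQ, hcm Q hQ⟩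
  · intro P hP
    exact hmc P
  · intro Q hQ
    exact hcm Q hQ
end
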